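/- arXiv:1209.5123 — 4 statements merged into one kernel-verified Lean document; each statement's English description precedes it below -/
import Mathlib

section
/- Let f : ℤ² → D be given by f(x,y) = g((x + 3y) mod 11) with g the base pattern sending 0,…,10 to N, NE, E, SE, S, SW, W, NW, N, NE, E. Then for any point v ∈ ℤ², any direction vector d ∈ {(1,0), (0,1), (1,1), (1,−1)}, and any target direction X ∈ D, the number of indices i ∈ {0, 1, …, 10} with f(v + i·d) = X is at least 1 and at most 2. -/
/-- The eight compass directions. -/
inductive Dir : Type
  | N | NE | E | SE | S | SW | W | NW
  deriving DecidableEq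

instance instFintypeDir : Fintype Dir :=
  ⟨⟨[Dir.N, Dir.NE, Dir.E, Dir.SE, Dir.S, Dir.SW, Dir.W, Dir.NW], by decide⟩,
    fun x => by cases x <;> decide⟩

open Dir in
/-- The base pattern sending residues 0,…,10 mod 11 to
N, NE, E, SE, S, SW, W, NW, N, NE, E respectively. -/
def g : ZMod 11 → Dir := fun z =>
  match z.val with
  | 0 => N | 1 => NE | 2 => E | 3 => SE | 4 => S
  | 5 => SW | 6 => W | 7 => NW | 8 => N | 9 => NE | _ => E

/-- The direction assignment `f(x,y) = g((x + 3y) mod 11)`. -/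
def f (v : ℤ × ℤ) : Dir := g ((v.1 + 3 * v.2 : ℤ) : ZMod 11)

/-!
Along a line with direction `d`, the index `x + 3y` of the base pattern moves by
`d.1 + 3 d.2 ∈ {1, 3, 4, -2}`, a unit mod 11, so 11 consecutive points run through every residue
exactly once. Each direction is therefore hit as often as `g` hits it: twice for `N`, `NE`, `E`,
once for the others.
-/

def phase (v : ℤ × ℤ) : ZMod 11 := ((v.1 + 3 * v.2 : ℤ) : ZMod 11)

theorem f_eq_g_phase (v : ℤ × ℤ) : f v = g (phase v) := rfl

theorem phase_add_natCast_smul (v d : ℤ × ℤ) (i : ℕ) :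
    phase (v + (i : ℤ) • d) = phase v + i * phase d := by
  simp only [phase, Prod.fst_add, Prod.snd_add, Prod.smul_fst, Prod.smul_snd, smul_eq_mul]
  push_cast
  ring

theorem isUnit_phase_of_mem {d : ℤ × ℤ}
    (hd : d ∈ ({(1, 0), (0, 1), (1, 1), (1, -1)} : Set (ℤ × ℤ))) : IsUnit (phase d) := by
  rcases hd with rfl | rfl | rfl | rfl <;> decide

theorem ZMod.card_filter_range_add_mul {n : ℕ} [NeZero n] (c : ZMod n) {s : ZMod n}
    (hs : IsUnit s) (P : ZMod n → Prop) [DecidablePred P] :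
    ((Finset.range n).filter fun i : ℕ => P (c + i * s)).card =
      (Finset.univ.filter P).card := by
  refine Finset.card_nbij' (fun i => c + i * s) (fun j => ((j - c) * hs.unit⁻¹ : ZMod n).val)
    ?_ ?_ ?_ ?_
  · intro i hi
    simp only [Finset.coe_filter, Finset.mem_range, Set.mem_ofPred_eq] at hi
    simpa using hi.2
  · intro j hj
    simp only [Finset.coe_filter, Finset.mem_univ, true_and, Finset.mem_range,
      Set.mem_ofPred_eq] at hj ⊢
    refine ⟨ZMod.val_lt _, ?_⟩
    simpa [mul_assoc] using hj
  · intro i hi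
    simp only [Finset.coe_filter, Finset.mem_range, Set.mem_ofPred_eq] at hi
    simp [mul_assoc, ZMod.val_cast_of_lt hi.1]
  · intro j _
    simp [mul_assoc]

theorem card_filter_g_eq_mem_Icc (X : Dir) :
    (Finset.univ.filter (g · = X)).card ∈ Set.Icc 1 2 := by
  revert X
  decide

/-- Among any 11 consecutive points of a horizontal, vertical or diagonal line,
each direction is assigned to at least 1 and at most 2 of the points. -/
theorem each_direction_once_or_twice_per_window (v : ℤ × ℤ)
    (d : ℤ × ℤ) (hd : d ∈ ({(1, 0), (0, 1), (1, 1), (1, -1)} : Set (ℤ × ℤ)))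
    (X : Dir) :
    1 ≤ ((Finset.range 11).filter fun i : ℕ => f (v + (i : ℤ) • d) = X).card ∧
    ((Finset.range 11).filter fun i : ℕ => f (v + (i : ℤ) • d) = X).card ≤ 2 := by
  simp only [f_eq_g_phase, phase_add_natCast_smul]
  rw [ZMod.card_filter_range_add_mul (phase v) (isUnit_phase_of_mem hd) (g · = X)]
  exact card_filter_g_eq_mem_Icc X
end

section
/- Let f : ℤ → D be periodic with period 11 such that the values E and W each appear at least once among f(0), …, f(10). Then for any n ≥ 10 and any n consecutive integers, the number of them assigned a value in {E, W} by f is at least 2(n−10)/11 ≥ 2n/11 − 2. -/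
/-!
Every residue class mod `p` meets any `n` consecutive integers in at least `⌊n / p⌋` points, and a
`p`-periodic function is constant on residue classes. So `E` and `W` are each taken at least
`⌊n / 11⌋ ≥ (n - 10) / 11` times, at distinct points since `E ≠ W`.
-/

open Finset

theorem Function.Periodic.eq_of_intModEq {α : Type*} {f : ℤ → α} {p : ℤ}
    (hf : Function.Periodic f p) {x y : ℤ} (h : x ≡ y [ZMOD p]) : f x = f y := by
  obtain ⟨t, rfl⟩ := Int.modEq_iff_add_fac.1 h
  rw [mul_comm]
  exact (hf.int_mul t x).symm

theorem Int.div_le_card_filter_modEq_Ico (a v : ℤ) (n p : ℕ) :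
    n / p ≤ #{x ∈ Ico a (a + n) | x ≡ v [ZMOD p]} := by
  rcases Nat.eq_zero_or_pos p with rfl | hp
  · simp
  have hp' : (0 : ℤ) < p := by exact_mod_cast hp
  have hr0 : 0 ≤ (v - a) % p := Int.emod_nonneg _ hp'.ne'
  have hrp : (v - a) % p < p := Int.emod_lt_of_pos _ hp'
  have hdiv : p * (n / p) ≤ n := Nat.mul_div_le n p
  let g : ℕ → ℤ := fun j => a + (v - a) % p + p * j
  calc (n / p : ℕ) = #(Finset.range (n / p)) := (card_range _).symm
    _ ≤ _ := card_le_card_of_injOn g ?_ ?_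
  · intro j hj
    have hj' : (p : ℤ) * (j + 1) ≤ n := by
      have : p * (j + 1) ≤ n := (Nat.mul_le_mul_left p (mem_range.1 hj)).trans hdiv
      exact_mod_cast this
    simp only [coe_filter, Set.mem_ofPred_eq, mem_Ico, g]
    refine ⟨⟨by nlinarith, by nlinarith⟩, ?_⟩
    calc a + (v - a) % p + p * j ≡ a + (v - a) + 0 [ZMOD p] :=
          ((Int.mod_modEq _ _).add_left a).add (Int.modEq_zero_iff_dvd.2 (dvd_mul_right _ _))
      _ = v := by ring
  · intro i _ j _ hij
    simpa [g, hp.ne'] using hij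

theorem Function.Periodic.div_le_card_filter_eq_Ico {α : Type*} [DecidableEq α] {f : ℤ → α}
    {p : ℕ} (hf : Function.Periodic f p) (a v : ℤ) (n : ℕ) :
    n / p ≤ #{x ∈ Ico a (a + n) | f x = f v} :=
  (Int.div_le_card_filter_modEq_Ico a v n p).trans <|
    card_le_card <| monotone_filter_right _ fun _ _ => hf.eq_of_intModEq

theorem count_EW_in_consecutive_general (D : Type) [DecidableEq D] (f : ℤ → D) (E W : D)
    (hEW : E ≠ W)
    (hper : ∀ x : ℤ, f (x + 11) = f x)
    (hE : ∃ x : ℤ, 0 ≤ x ∧ x ≤ 10 ∧ f x = E)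
    (hW : ∃ x : ℤ, 0 ≤ x ∧ x ≤ 10 ∧ f x = W)
    (n : ℕ) (a : ℤ) :
    (2 * ((n : ℝ) - 10) / 11 ≤
      ((Finset.Icc a (a + n - 1)).filter fun i => f i = E ∨ f i = W).card) ∧
    2 * (n : ℝ) / 11 - 2 ≤ 2 * ((n : ℝ) - 10) / 11 := by
  obtain ⟨xE, -, -, rfl⟩ := hE
  obtain ⟨xW, -, -, rfl⟩ := hW
  have hf : Function.Periodic f (11 : ℕ) := hper
  have hcount : 2 * (n / 11) ≤ #{i ∈ Icc a (a + n - 1) | f i = f xE ∨ f i = f xW} := by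
    rw [Icc_sub_one_right_eq_Ico, filter_or, card_union_of_disjoint
      (disjoint_filter.2 fun _ _ h₁ h₂ => hEW (h₁.symm.trans h₂))]
    linarith [hf.div_le_card_filter_eq_Ico a xE n, hf.div_le_card_filter_eq_Ico a xW n]
  have hfloor : (n : ℝ) ≤ 11 * (n / 11 : ℕ) + 10 := by
    exact_mod_cast (by omega : n ≤ 11 * (n / 11) + 10)
  have hcount' : (2 * (n / 11 : ℕ) : ℝ) ≤ #{i ∈ Icc a (a + n - 1) | f i = f xE ∨ f i = f xW} := by
    exact_mod_cast hcount
  constructor <;> linarith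

/-- If `f : ℤ → D` is 11-periodic and the distinct values `E` and `W` each appear among
`f 0, …, f 10`, then among any `n ≥ 10` consecutive integers at least `2(n−10)/11 ≥ 2n/11 − 2`
are assigned a value in `{E, W}`. -/
theorem count_EW_in_consecutive (D : Type) [DecidableEq D] (f : ℤ → D) (E W : D)
    (hEW : E ≠ W)
    (hper : ∀ x : ℤ, f (x + 11) = f x)
    (hE : ∃ x : ℤ, 0 ≤ x ∧ x ≤ 10 ∧ f x = E)
    (hW : ∃ x : ℤ, 0 ≤ x ∧ x ≤ 10 ∧ f x = W)
    (n : ℕ) (hn : 10 ≤ n) (a : ℤ) :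
    (2 * ((n : ℝ) - 10) / 11 ≤
      ((Finset.Icc a (a + n - 1)).filter fun i => f i = E ∨ f i = W).card) ∧
    2 * (n : ℝ) / 11 - 2 ≤ 2 * ((n : ℝ) - 10) / 11 :=
  count_EW_in_consecutive_general D f E W hEW hper hE hW n a
end

section
/- With 𝓕 as above, every set of n consecutive collinear points of ℤ² (horizontal, vertical, or in either diagonal direction) is contained in some member of 𝓕. -/
/-- Horizontal segment `F_{i,j} = {(x, i) : jn ≤ x ≤ (j+2)n − 1}`. -/
def segF (n i j : ℤ) : Set (ℤ × ℤ) :=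
  {p | p.2 = i ∧ j * n ≤ p.1 ∧ p.1 ≤ (j + 2) * n - 1}

/-- Vertical segment `G_{i,j} = {(i, y) : jn ≤ y ≤ (j+2)n − 1}`. -/
def segG (n i j : ℤ) : Set (ℤ × ℤ) :=
  {p | p.1 = i ∧ j * n ≤ p.2 ∧ p.2 ≤ (j + 2) * n - 1}

/-- Diagonal segment `H_{i,j} = {(i+k, k) : jn ≤ k ≤ (j+2)n − 1}`. -/
def segH (n i j : ℤ) : Set (ℤ × ℤ) :=
  {p | p.1 = i + p.2 ∧ j * n ≤ p.2 ∧ p.2 ≤ (j + 2) * n - 1}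

/-- Anti-diagonal segment `I_{i,j} = {(i+k, −k) : jn ≤ k ≤ (j+2)n − 1}`. -/
def segI (n i j : ℤ) : Set (ℤ × ℤ) :=
  {p | p.1 = i + -p.2 ∧ j * n ≤ -p.2 ∧ -p.2 ≤ (j + 2) * n - 1}

/-- The covering family `𝓕` of all such segments. -/
def fam (n : ℤ) : Set (Set (ℤ × ℤ)) :=
  {F | ∃ i j : ℤ, F = segF n i j} ∪ {F | ∃ i j : ℤ, F = segG n i j} ∪
  {F | ∃ i j : ℤ, F = segH n i j} ∪ {F | ∃ i j : ℤ, F = segI n i j}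

/-!
Along a winning line `v + k • d` (`0 ≤ k < n`) the index `i` of the matching segment family is
constant, while the segment parameter runs through an interval `[a, a + n - 1]`; such an interval
lies in the window `[jn, (j + 2)n - 1]` for `j = ⌊a / n⌋`.
-/

def winningSet (n : ℤ) (v d : ℤ × ℤ) : Set (ℤ × ℤ) :=
  {p | ∃ k : ℤ, 0 ≤ k ∧ k ≤ n - 1 ∧ p = v + k • d}

lemma exists_Icc_subset_window (n a : ℤ) :
    ∃ j : ℤ, Set.Icc a (a + n - 1) ⊆ Set.Icc (j * n) ((j + 2) * n - 1) := by
  rcases lt_or_ge 0 n with hn | hn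
  · refine ⟨a / n, Set.Icc_subset_Icc ?_ ?_⟩
    · exact Int.ediv_mul_le a hn.ne'
    · nlinarith [Int.lt_ediv_add_one_mul_self a hn]
  · exact ⟨0, fun x hx => absurd hx.1 (by have := hx.2; omega)⟩

lemma winningSet_subset_segF (n : ℤ) (v : ℤ × ℤ) :
    ∃ j, winningSet n v (1, 0) ⊆ segF n v.2 j := by
  obtain ⟨j, hj⟩ := exists_Icc_subset_window n v.1
  refine ⟨j, ?_⟩
  rintro _ ⟨k, hk0, hk1, rfl⟩
  have := @hj (v.1 + k) ⟨by omega, by omega⟩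
  simp only [segF, Set.mem_Icc, Set.mem_ofPred_eq, Prod.fst_add, Prod.snd_add, Prod.smul_mk,
    smul_eq_mul] at this ⊢
  omega

lemma winningSet_subset_segG (n : ℤ) (v : ℤ × ℤ) :
    ∃ j, winningSet n v (0, 1) ⊆ segG n v.1 j := by
  obtain ⟨j, hj⟩ := exists_Icc_subset_window n v.2
  refine ⟨j, ?_⟩
  rintro _ ⟨k, hk0, hk1, rfl⟩
  have := @hj (v.2 + k) ⟨by omega, by omega⟩
  simp only [segG, Set.mem_Icc, Set.mem_ofPred_eq, Prod.fst_add, Prod.snd_add, Prod.smul_mk,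
    smul_eq_mul] at this ⊢
  omega

lemma winningSet_subset_segH (n : ℤ) (v : ℤ × ℤ) :
    ∃ j, winningSet n v (1, 1) ⊆ segH n (v.1 - v.2) j := by
  obtain ⟨j, hj⟩ := exists_Icc_subset_window n v.2
  refine ⟨j, ?_⟩
  rintro _ ⟨k, hk0, hk1, rfl⟩
  have := @hj (v.2 + k) ⟨by omega, by omega⟩
  simp only [segH, Set.mem_Icc, Set.mem_ofPred_eq, Prod.fst_add, Prod.snd_add, Prod.smul_mk,
    smul_eq_mul] at this ⊢
  omega

lemma winningSet_subset_segI (n : ℤ) (v : ℤ × ℤ) :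
    ∃ j, winningSet n v (1, -1) ⊆ segI n (v.1 + v.2) j := by
  obtain ⟨j, hj⟩ := exists_Icc_subset_window n (-v.2)
  refine ⟨j, ?_⟩
  rintro _ ⟨k, hk0, hk1, rfl⟩
  have := @hj (-v.2 + k) ⟨by omega, by omega⟩
  simp only [segI, Set.mem_Icc, Set.mem_ofPred_eq, Prod.fst_add, Prod.snd_add, Prod.smul_mk,
    smul_eq_mul] at this ⊢
  omega

theorem winning_set_in_family_general (n : ℤ) (v : ℤ × ℤ) (d : ℤ × ℤ)
    (hd : d ∈ ({(1, 0), (0, 1), (1, 1), (1, -1)} : Set (ℤ × ℤ))) :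
    ∃ F ∈ fam n, {p : ℤ × ℤ | ∃ k : ℤ, 0 ≤ k ∧ k ≤ n - 1 ∧ p = v + k • d} ⊆ F := by
  simp only [Set.mem_insert_iff, Set.mem_singleton_iff] at hd
  rcases hd with rfl | rfl | rfl | rfl
  · obtain ⟨j, hj⟩ := winningSet_subset_segF n v
    exact ⟨_, Or.inl (Or.inl (Or.inl ⟨_, _, rfl⟩)), hj⟩
  · obtain ⟨j, hj⟩ := winningSet_subset_segG n v
    exact ⟨_, Or.inl (Or.inl (Or.inr ⟨_, _, rfl⟩)), hj⟩
  · obtain ⟨j, hj⟩ := winningSet_subset_segH n v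
    exact ⟨_, Or.inl (Or.inr ⟨_, _, rfl⟩), hj⟩
  · obtain ⟨j, hj⟩ := winningSet_subset_segI n v
    exact ⟨_, Or.inr ⟨_, _, rfl⟩, hj⟩

/-- Every set of `n` consecutive collinear points (horizontal, vertical or diagonal)
is contained in some member of `𝓕`. -/
theorem winning_set_in_family (n : ℤ) (hn : 1 ≤ n) (v : ℤ × ℤ) (d : ℤ × ℤ)
    (hd : d ∈ ({(1, 0), (0, 1), (1, 1), (1, -1)} : Set (ℤ × ℤ))) :
    ∃ F ∈ fam n, {p : ℤ × ℤ | ∃ k : ℤ, 0 ≤ k ∧ k ≤ n - 1 ∧ p = v + k • d} ⊆ F :=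
  winning_set_in_family_general n v d hd
end

section
/- Let R ⊆ [1, 2n] be a set of 'red' integers such that no n consecutive integers of [1, 2n] are all in R. Let x be the largest element of [1, n] not in R and y the smallest element of [n+1, 2n] not in R (both exist). Then y − x ≤ n, and every interval of n consecutive integers contained in [1, 2n] contains x or y. -/
/-- The spoiling lemma: if no `n` consecutive integers of `[1, 2n]` all lie in `R`, then the
largest non-`R` point `x` of `[1, n]` and the smallest non-`R` point `y` of `[n+1, 2n]`
exist, satisfy `y − x ≤ n`, and every interval of `n` consecutive integers inside `[1, 2n]`
contains `x` or `y`. -/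
theorem spoiling_lemma (n : ℤ) (hn : 1 ≤ n) (R : Set ℤ) (hR : R ⊆ Set.Icc 1 (2 * n))
    (hno : ∀ a : ℤ, Set.Icc a (a + n - 1) ⊆ Set.Icc 1 (2 * n) →
      ¬ Set.Icc a (a + n - 1) ⊆ R) :
    ∃ x y : ℤ,
      (x ∈ Set.Icc 1 n ∧ x ∉ R ∧ ∀ z ∈ Set.Icc 1 n, z ∉ R → z ≤ x) ∧
      (y ∈ Set.Icc (n + 1) (2 * n) ∧ y ∉ R ∧ ∀ z ∈ Set.Icc (n + 1) (2 * n), z ∉ R → y ≤ z) ∧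
      y - x ≤ n ∧
      ∀ a : ℤ, Set.Icc a (a + n - 1) ⊆ Set.Icc 1 (2 * n) →
        x ∈ Set.Icc a (a + n - 1) ∨ y ∈ Set.Icc a (a + n - 1) := by
  have h1 : ¬ Set.Icc (1:ℤ) (1 + n - 1) ⊆ R := by
    apply hno
    intro z hz
    simp only [Set.mem_Icc] at *
    omega
  have h2 : ¬ Set.Icc (n + 1) (n + 1 + n - 1) ⊆ R := by
    apply hno
    intro z hz
    simp only [Set.mem_Icc] at *
    omega
  have e1 : ∃ z : ℤ, z ∈ Set.Icc (1:ℤ) n ∧ z ∉ R := by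
    rw [Set.not_subset] at h1
    obtain ⟨z, hz, hzR⟩ := h1
    exact ⟨z, by simpa using hz, hzR⟩
  have e2 : ∃ z : ℤ, z ∈ Set.Icc (n + 1) (2 * n) ∧ z ∉ R := by
    rw [Set.not_subset] at h2
    obtain ⟨z, hz, hzR⟩ := h2
    simp only [Set.mem_Icc] at hz
    exact ⟨z, by simp only [Set.mem_Icc]; omega, hzR⟩
  obtain ⟨x, ⟨hx1, hx2⟩, hxmax⟩ :=
    Int.exists_greatest_of_bdd (P := fun z => z ∈ Set.Icc (1:ℤ) n ∧ z ∉ R)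
      ⟨n, fun z hz => hz.1.2⟩ e1
  obtain ⟨y, ⟨hy1, hy2⟩, hymin⟩ :=
    Int.exists_least_of_bdd (P := fun z => z ∈ Set.Icc (n + 1) (2 * n) ∧ z ∉ R)
      ⟨n + 1, fun z hz => hz.1.1⟩ e2
  simp only [Set.mem_Icc] at hx1 hy1
  -- key: y ≤ x + n
  have key : y ≤ x + n := by
    by_contra hlt
    push_neg at hlt
    apply hno (x + 1)
    · intro z hz
      simp only [Set.mem_Icc] at *
      omega
    · intro z hz
      simp only [Set.mem_Icc] at hz
      by_contra hzR
      rcases le_or_gt z n with h | h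
      · have := hxmax z ⟨⟨by omega, h⟩, hzR⟩
        omega
      · have := hymin z ⟨⟨by omega, by omega⟩, hzR⟩
        omega
  refine ⟨x, y, ⟨by simp only [Set.mem_Icc]; omega, hx2,
      fun z hz hzR => hxmax z ⟨by simpa using hz, hzR⟩⟩,
    ⟨by simp only [Set.mem_Icc]; omega, hy2,
      fun z hz hzR => hymin z ⟨by simpa using hz, hzR⟩⟩,
    by omega, ?_⟩
  intro a ha
  have ha1 : 1 ≤ a := (ha ⟨le_refl a, by omega⟩).1
  have ha2 : a + n - 1 ≤ 2 * n := (ha ⟨by omega, le_refl _⟩).2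
  simp only [Set.mem_Icc]
  rcases le_or_gt a x with h | h
  · left; omega
  · right; omega
end
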